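/- If each point has a unique nearest anchor, then as α → ∞, H_diff(S) converges to the Shannon entropy of the hard cluster assignment, i.e., -Σ_j (n_j/n) log(n_j/n), where n_j is the number of points whose nearest anchor is c_j. -/

import Mathlib

open scoped BigOperators

noncomputable def softAssign {d n k : ℕ} (α : ℝ)
    (x : Fin n → EuclideanSpace ℝ (Fin d)) (c : Fin k → EuclideanSpace ℝ (Fin d))
    (i : Fin n) (j : Fin k) : ℝ :=
  Real.exp (-α * ‖x i - c j‖ ^ 2) / ∑ ℓ : Fin k, Real.exp (-α * ‖x i - c ℓ‖ ^ 2)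

/-- Cluster probabilities p_j = (1/n) ∑_i p_{ij}. -/
noncomputable def clusterProb {d n k : ℕ} (α : ℝ)
    (x : Fin n → EuclideanSpace ℝ (Fin d)) (c : Fin k → EuclideanSpace ℝ (Fin d))
    (j : Fin k) : ℝ :=
  (1 / (n : ℝ)) * ∑ i : Fin n, softAssign α x c i j

/-- Differentiable entropy estimator (with 0 log 0 = 0, via Real.log 0 = 0). -/
noncomputable def Hdiff {d n k : ℕ} (α : ℝ)
    (x : Fin n → EuclideanSpace ℝ (Fin d)) (c : Fin k → EuclideanSpace ℝ (Fin d)) : ℝ :=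
  -∑ j : Fin k, clusterProb α x c j * Real.log (clusterProb α x c j)

/-
As `α → ∞` the softmax weights `p_{ij}(α)` concentrate on the unique nearest anchor of `x_i`:
after dividing by the weight of that anchor, every other weight is `exp (-α δ)` for some gap
`δ > 0`. Hence `p_j(α) → n_j / n`, and `H_diff` converges by continuity of `t ↦ t log t`.
-/

open Filter Topology

lemma tendsto_exp_neg_mul_div_sum_atTop {ι : Type*} [Fintype ι] [DecidableEq ι]
    (D : ι → ℝ) (j₀ : ι) (hj₀ : ∀ ℓ, ℓ ≠ j₀ → D j₀ < D ℓ) (j : ι) :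
    Tendsto (fun α : ℝ => Real.exp (-α * D j) / ∑ ℓ, Real.exp (-α * D ℓ)) atTop
      (𝓝 (if j₀ = j then 1 else 0)) := by
  have hrescale : ∀ α : ℝ, Real.exp (-α * D j) / ∑ ℓ, Real.exp (-α * D ℓ) =
      Real.exp (-α * (D j - D j₀)) / ∑ ℓ, Real.exp (-α * (D ℓ - D j₀)) := by
    intro α
    have hsplit : ∀ ℓ,
        Real.exp (-α * (D ℓ - D j₀)) = Real.exp (α * D j₀) * Real.exp (-α * D ℓ) := by
      intro ℓ
      rw [← Real.exp_add]
      ring_nf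
    simp only [hsplit, ← Finset.mul_sum, mul_div_mul_left _ _ (Real.exp_ne_zero _)]
  have hterm : ∀ ℓ, Tendsto (fun α : ℝ => Real.exp (-α * (D ℓ - D j₀))) atTop
      (𝓝 (if j₀ = ℓ then 1 else 0)) := by
    intro ℓ
    rcases eq_or_ne j₀ ℓ with rfl | hne
    · simp
    · rw [if_neg hne]
      have hpos : 0 < D ℓ - D j₀ := sub_pos.mpr (hj₀ ℓ (Ne.symm hne))
      exact Real.tendsto_exp_atBot.comp
        (tendsto_neg_atTop_atBot.atBot_mul_const hpos)
  have hsum : Tendsto (fun α : ℝ => ∑ ℓ, Real.exp (-α * (D ℓ - D j₀))) atTop (𝓝 1) := by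
    simpa using tendsto_finsetSum Finset.univ fun ℓ _ => hterm ℓ
  simp only [hrescale]
  have hlim := (hterm j).div hsum one_ne_zero
  rwa [div_one] at hlim

section HardAssignment

variable {d n k : ℕ}
  (x : Fin n → EuclideanSpace ℝ (Fin d)) (c : Fin k → EuclideanSpace ℝ (Fin d)) (jstar : Fin n → Fin k)
  (hmin : ∀ i : Fin n, ∀ ℓ : Fin k, ℓ ≠ jstar i → ‖x i - c (jstar i)‖ < ‖x i - c ℓ‖)
include hmin

lemma tendsto_softAssign_atTop (i : Fin n) (j : Fin k) :
    Tendsto (fun α : ℝ => softAssign α x c i j) atTop (𝓝 (if jstar i = j then 1 else 0)) :=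
  tendsto_exp_neg_mul_div_sum_atTop (fun ℓ => ‖x i - c ℓ‖ ^ 2) (jstar i)
    (fun ℓ hℓ => pow_lt_pow_left₀ (hmin i ℓ hℓ) (norm_nonneg _) two_ne_zero) j

lemma tendsto_clusterProb_atTop (j : Fin k) :
    Tendsto (fun α : ℝ => clusterProb α x c j) atTop
      (𝓝 ((Finset.univ.filter (fun i : Fin n => jstar i = j)).card / n : ℝ)) := by
  have hsum :=
    tendsto_finsetSum Finset.univ fun i _ => tendsto_softAssign_atTop x c jstar hmin i j
  rw [Finset.sum_boole] at hsum
  simpa only [clusterProb, one_div_mul_eq_div] using hsum.const_mul (1 / (n : ℝ))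

end HardAssignment

theorem Hdiff_tendsto_hard_entropy_general {d n k : ℕ}
    (x : Fin n → EuclideanSpace ℝ (Fin d)) (c : Fin k → EuclideanSpace ℝ (Fin d))
    (jstar : Fin n → Fin k)
    (hmin : ∀ i : Fin n, ∀ ℓ : Fin k, ℓ ≠ jstar i → ‖x i - c (jstar i)‖ < ‖x i - c ℓ‖) :
    Tendsto (fun α : ℝ => Hdiff α x c) atTop
      (nhds (-∑ j : Fin k,
        (((Finset.univ.filter (fun i : Fin n => jstar i = j)).card : ℝ) / n) *
          Real.log (((Finset.univ.filter (fun i : Fin n => jstar i = j)).card : ℝ) / n))) := by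
  unfold Hdiff
  refine (tendsto_finsetSum Finset.univ fun j _ => ?_).neg
  exact (Real.continuous_mul_log.tendsto _).comp (tendsto_clusterProb_atTop x c jstar hmin j)

/-- As α → ∞, H_diff converges to the Shannon entropy of the hard cluster assignment. -/
theorem Hdiff_tendsto_hard_entropy {d n k : ℕ} (hn : 0 < n)
    (x : Fin n → EuclideanSpace ℝ (Fin d)) (c : Fin k → EuclideanSpace ℝ (Fin d))
    (hc : Function.Injective c)
    (jstar : Fin n → Fin k)
    (hmin : ∀ i : Fin n, ∀ ℓ : Fin k, ℓ ≠ jstar i → ‖x i - c (jstar i)‖ < ‖x i - c ℓ‖) :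
    Tendsto (fun α : ℝ => Hdiff α x c) atTop
      (nhds (-∑ j : Fin k,
        (((Finset.univ.filter (fun i : Fin n => jstar i = j)).card : ℝ) / n) *
          Real.log (((Finset.univ.filter (fun i : Fin n => jstar i = j)).card : ℝ) / n))) :=
  Hdiff_tendsto_hard_entropy_general x c jstar hmin
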